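/- Let g ∈ N, x ∈ R and 1 ≤ i ≠ j ≤ n. If some off-diagonal entry (at a position (p,q) with p ≠ q) of the commutator [g, t_{ij}(x)] = g·t_{ij}(x)·g⁻¹·t_{ij}(x)⁻¹ equals zero, then g ∈ C(n, Ann(RxR)), where RxR is the two-sided ideal generated by x. -/

import Mathlib

/- Common definitions: linear groups over an associative ring with identity,
transvections, elementary subgroups, congruence subgroups, and the
stability-theoretic properties of rings, following V. M. Petechuk,
"Stability of rings". Throughout, `GL(n,R)` is realized as the group of
units `(Matrix (Fin n) (Fin n) R)ˣ`. -/

open Matrix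

section Defs

variable (n : ℕ) (R : Type*) [Ring R]

/-- A transvection: an invertible matrix of the form `1 + r·e_{ij}` with `i ≠ j`. -/
def IsTransvection {n : ℕ} {R : Type*} [Ring R] (g : (Matrix (Fin n) (Fin n) R)ˣ) : Prop :=
  ∃ i j : Fin n, i ≠ j ∧ ∃ r : R, g.val = 1 + Matrix.single i j r

/-- `E_X`: the subgroup of `GL(n,R)` generated by the transvections `t_{ij}(x)`, `x ∈ X`,
`i ≠ j`. -/
def Esub (X : Set R) : Subgroup (Matrix (Fin n) (Fin n) R)ˣ :=
  Subgroup.closure {g | ∃ i j : Fin n, i ≠ j ∧ ∃ x ∈ X, g.val = 1 + Matrix.single i j x}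

/-- `E(n,R) = E_R`. -/
def En : Subgroup (Matrix (Fin n) (Fin n) R)ˣ := Esub n R Set.univ

/-- `E(n,I)`: the normal closure of `E_I` in `E(n,R)`. -/
def EnI {R : Type*} [Ring R] (I : TwoSidedIdeal R) : Subgroup (Matrix (Fin n) (Fin n) R)ˣ :=
  Subgroup.closure {g | ∃ h ∈ En n R, ∃ e ∈ Esub n R (I : Set R), g = h * e * h⁻¹}

/-- `Λ_I`: entrywise reduction `GL(n,R) → GL(n, R/I)`. -/
def lamI {R : Type*} [Ring R] (I : TwoSidedIdeal R) :
    (Matrix (Fin n) (Fin n) R)ˣ →* (Matrix (Fin n) (Fin n) I.ringCon.Quotient)ˣ :=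
  Units.map ((RingCon.mk' I.ringCon).mapMatrix.toMonoidHom)

/-- `C_I = ker Λ_I`: the principal congruence subgroup of level `I`. -/
def CIsub {R : Type*} [Ring R] (I : TwoSidedIdeal R) : Subgroup (Matrix (Fin n) (Fin n) R)ˣ :=
  (lamI n I).ker

/-- `C(n,I) = Λ_I⁻¹(ξGL(n,R/I))`. -/
def CnI {R : Type*} [Ring R] (I : TwoSidedIdeal R) : Subgroup (Matrix (Fin n) (Fin n) R)ˣ :=
  (Subgroup.center _).comap (lamI n I)

/-- `R` is a commutator ring: `[C(n,I), E(n,R)] = E(n,I) ⊴ GL(n,R)` for every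
two-sided ideal `I`. -/
def IsCommutatorRing : Prop :=
  ∀ I : TwoSidedIdeal R, ⁅CnI n I, En n R⁆ = EnI n I ∧ (EnI n I).Normal

/-- Iterated commutator subgroup `[H, K, K, …, K]` (`k` copies of `K`). -/
def iterCommutator {G : Type*} [Group G] (H K : Subgroup G) : ℕ → Subgroup G
  | 0 => H
  | m + 1 => ⁅iterCommutator H K m, K⁆

/-- `R` is weakly-commutator of length `k`:
`[C(n,I), E(n,R), …, E(n,R)] = E(n,I) ⊴ GL(n,R)` (`k` copies of `E(n,R)`)
simultaneously for every two-sided ideal `I`. -/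
def IsWeaklyCommutatorRing (k : ℕ) : Prop :=
  0 < k ∧ ∀ I : TwoSidedIdeal R,
    iterCommutator (CnI n I) (En n R) k = EnI n I ∧ (EnI n I).Normal

/-- `R` is a normal ring: every subgroup invariant under conjugation by `E(n,R)` is
squeezed between `E(n,I)` and `C(n,I)` for some two-sided ideal `I`. -/
def IsNormalRing : Prop :=
  ∀ G : Subgroup (Matrix (Fin n) (Fin n) R)ˣ,
    (∀ e ∈ En n R, ∀ g ∈ G, e * g * e⁻¹ ∈ G) →
    ∃ I : TwoSidedIdeal R, EnI n I ≤ G ∧ G ≤ CnI n I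

/-- `R` is partially normal: every subgroup invariant under conjugation by `E(n,R)`
containing no non-identity transvection is contained in the center of `GL(n,R)`. -/
def IsPartiallyNormalRing : Prop :=
  ∀ N : Subgroup (Matrix (Fin n) (Fin n) R)ˣ,
    (∀ e ∈ En n R, ∀ g ∈ N, e * g * e⁻¹ ∈ N) →
    (∀ g ∈ N, IsTransvection g → g = 1) →
    N ≤ Subgroup.center _

/-- `R` is stable: both commutator and normal. -/
def IsStableRing : Prop := IsCommutatorRing n R ∧ IsNormalRing n R

/-- The annihilator `Ann I = {r | rI = Ir = 0}` of a two-sided ideal, as a two-sided ideal. -/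
def annIdeal {R : Type*} [Ring R] (I : TwoSidedIdeal R) : TwoSidedIdeal R :=
  TwoSidedIdeal.mk' {r : R | ∀ a ∈ I, r * a = 0 ∧ a * r = 0}
    (fun a _ => ⟨zero_mul a, mul_zero a⟩)
    (fun {x y} hx hy a ha => by
      refine ⟨?_, ?_⟩
      · rw [add_mul, (hx a ha).1, (hy a ha).1, add_zero]
      · rw [mul_add, (hx a ha).2, (hy a ha).2, add_zero])
    (fun {x} hx a ha => by
      refine ⟨?_, ?_⟩
      · rw [neg_mul, (hx a ha).1, neg_zero]
      · rw [mul_neg, (hx a ha).2, neg_zero])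
    (fun {x y} hy a ha => by
      refine ⟨?_, ?_⟩
      · rw [mul_assoc, (hy a ha).1, mul_zero]
      · rw [← mul_assoc]
        exact (hy (a * x) (I.mul_mem_right a x ha)).2)
    (fun {x y} hx a ha => by
      refine ⟨?_, ?_⟩
      · rw [mul_assoc]
        exact (hx (y * a) (I.mul_mem_left y a ha)).1
      · rw [← mul_assoc, (hx a ha).2, zero_mul])

end Defs

/-!
Let `G ∈ N`, `k ≠ l`, `y ∈ R`, and put `W = G e_{kl}(y) G⁻¹`, so `G t_{kl}(y) G⁻¹ = 1 + W` lies
in the coset `N t_{kl}(y)`. Conjugating a transvection `e` by `1 + W` and by `t_{kl}(y)` therefore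
gives results that are congruent modulo `N`. When column `m ≠ l` of `W` vanishes, taking
`e = t_{mc}(1)` makes the quotient `1 + e_{mc}(1) (e_{kl}(y) - W)`, an element of `N` supported on
row `m`. Such an element is `1`: its commutator with `t_{bd}(1)` is a transvection in row `m`
whose entry is the `(m, b)` entry of the element. So `G e_{kl}(y)` and `e_{kl}(y) G` agree off row
`m`; dually, they agree off column `m` when row `m ≠ k` of `W` vanishes. These identities spread a
single relation `G_{mk} y = 0` (`m ≠ k`): then every off-diagonal entry of `G` annihilates `y` on
both sides, and `G_{kk} y = y G_{ll}`.

With `y = 1`, this makes the commutator `h = [g, t_{ij}(x)]` diagonal. The identity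
`1 + g e_{ij}(x) g⁻¹ = h t_{ij}(x)` then gives `g_{νi} x g⁻¹_{jμ} = 0` for `μ ∉ {ν, j}`. Writing
`x = Σ_ν g⁻¹_{iν} g_{νi} x` turns these relations into one relation `g_{js} r = 0` for every `r` in
`RxR`. Hence, modulo `Ann(RxR)`, `g` is a scalar matrix with a central entry.
-/

section SquareZero

variable {α : Type*} [Ring α] {W P S : α}

theorem one_add_mul_one_sub_of_mul_self_eq_zero (hWW : W * W = 0) : (1 + W) * (1 - W) = 1 := by
  calc (1 + W) * (1 - W) = 1 - W * W := by noncomm_ring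
    _ = 1 := by rw [hWW, sub_zero]

theorem one_sub_mul_one_add_of_mul_self_eq_zero (hWW : W * W = 0) : (1 - W) * (1 + W) = 1 := by
  calc (1 - W) * (1 + W) = 1 - W * W := by noncomm_ring
    _ = 1 := by rw [hWW, sub_zero]

theorem Units.coe_inv_eq_one_sub_of_mul_self_eq_zero {z : αˣ} (hz : z.val = 1 + W)
    (hWW : W * W = 0) : (z⁻¹).val = 1 - W :=
  Units.inv_eq_of_mul_eq_one_right (by rw [hz, one_add_mul_one_sub_of_mul_self_eq_zero hWW])

theorem conj_one_add_of_mul_eq_zero (hWW : W * W = 0) (hWP : W * P = 0) :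
    (1 + W) * (1 + P) * (1 - W) = 1 + P - P * W := by
  calc (1 + W) * (1 + P) * (1 - W) = 1 + P - P * W + W * P - W * W - W * P * W := by
        noncomm_ring
    _ = 1 + P - P * W := by rw [hWP, hWW, zero_mul]; abel

theorem conj_one_add_of_mul_eq_zero' (hWW : W * W = 0) (hPW : P * W = 0) :
    (1 + W) * (1 + P) * (1 - W) = 1 + P + W * P := by
  calc (1 + W) * (1 + P) * (1 - W) = 1 + P + W * P - P * W - W * W - W * (P * W) := by
        noncomm_ring
    _ = 1 + P + W * P := by rw [hPW, hWW, mul_zero]; abel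

theorem one_add_sub_mul_mul_one_sub_add_mul (hPP : P * P = 0) (hWP : W * P = 0) :
    (1 + P - P * W) * (1 - P + P * S) = 1 + P * (S - W) := by
  calc (1 + P - P * W) * (1 - P + P * S)
      = 1 + P * (S - W) - P * P + P * P * S + P * (W * P) - P * (W * P) * S := by noncomm_ring
    _ = 1 + P * (S - W) := by rw [hPP, hWP]; simp

theorem one_add_add_mul_mul_one_sub_sub_mul (hPP : P * P = 0) (hPS : P * S = 0) :
    (1 + P + W * P) * (1 - P - S * P) = 1 + (W - S) * P := by
  calc (1 + P + W * P) * (1 - P - S * P)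
      = 1 + (W - S) * P - P * P - P * S * P - W * (P * P) - W * (P * S) * P := by noncomm_ring
    _ = 1 + (W - S) * P := by rw [hPP, hPS]; simp

end SquareZero

namespace Matrix

variable {ι R : Type*} [Fintype ι] [DecidableEq ι] [Ring R]

theorem mul_single_mul_apply (A B : Matrix ι ι R) (k l : ι) (y : R) (a b : ι) :
    (A * single k l y * B) a b = A a k * y * B l b := by
  rw [mul_apply, Finset.sum_eq_single l (fun x _ hx => by simp [hx]) (by simp)]
  simp

variable {n : ℕ}

def transvectionUnit {i j : Fin n} (hij : i ≠ j) (r : R) : (Matrix (Fin n) (Fin n) R)ˣ where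
  val := 1 + single i j r
  inv := 1 - single i j r
  val_inv := by
    rw [one_add_mul_one_sub_of_mul_self_eq_zero (single_mul_single_of_ne r i j i hij.symm r)]
  inv_val := by
    rw [one_sub_mul_one_add_of_mul_self_eq_zero (single_mul_single_of_ne r i j i hij.symm r)]

@[simp]
theorem transvectionUnit_val {i j : Fin n} (hij : i ≠ j) (r : R) :
    (transvectionUnit hij r).val = 1 + single i j r := rfl

@[simp]
theorem transvectionUnit_inv_val {i j : Fin n} (hij : i ≠ j) (r : R) :
    ((transvectionUnit hij r)⁻¹).val = 1 - single i j r := rfl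

theorem transvectionUnit_mem_En {i j : Fin n} (hij : i ≠ j) (r : R) :
    transvectionUnit hij r ∈ En n R :=
  Subgroup.subset_closure ⟨i, j, hij, r, Set.mem_univ r, rfl⟩

theorem conj_transvectionUnit_val (G : (Matrix (Fin n) (Fin n) R)ˣ) {k l : Fin n} (hkl : k ≠ l)
    (y : R) : (G * transvectionUnit hkl y * G⁻¹).val = 1 + G.val * single k l y * (G⁻¹).val := by
  rw [Units.val_mul, Units.val_mul, transvectionUnit_val, mul_add, mul_one, add_mul, G.mul_inv]

theorem conj_single_mul_self_eq_zero (G : (Matrix (Fin n) (Fin n) R)ˣ) {k l : Fin n}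
    (hkl : k ≠ l) (y : R) :
    G.val * single k l y * (G⁻¹).val * (G.val * single k l y * (G⁻¹).val) = 0 := by
  rw [show G.val * single k l y * (G⁻¹).val * (G.val * single k l y * (G⁻¹).val) =
      G.val * (single k l y * ((G⁻¹).val * G.val) * single k l y) * (G⁻¹).val by
    simp only [mul_assoc], G.inv_mul, mul_one, single_mul_single_of_ne _ _ _ _ hkl.symm]
  simp

end Matrix

section

variable {R : Type*} [Ring R] {n : ℕ}

theorem mem_annIdeal {I : TwoSidedIdeal R} {a : R} :
    a ∈ annIdeal I ↔ ∀ r ∈ I, a * r = 0 ∧ r * a = 0 :=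
  TwoSidedIdeal.mem_mk' _ _ _ _ _ _ a

theorem TwoSidedIdeal.mk'_ringCon_eq_iff (I : TwoSidedIdeal R) (a b : R) :
    RingCon.mk' I.ringCon a = RingCon.mk' I.ringCon b ↔ a - b ∈ I :=
  (RingCon.eq _).trans (I.rel_iff a b)

theorem mem_CnI_annIdeal (hn : 3 ≤ n) {J : TwoSidedIdeal R} {g : (Matrix (Fin n) (Fin n) R)ˣ}
    (hoff : ∀ r ∈ J, ∀ a b, a ≠ b → g.val a b * r = 0 ∧ r * g.val a b = 0)
    (hdiag : ∀ r ∈ J, ∀ k l, k ≠ l → g.val k k * r = r * g.val l l) :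
    g ∈ CnI n (annIdeal J) := by
  set π := RingCon.mk' (annIdeal J).ringCon
  set k₀ : Fin n := ⟨0, by omega⟩
  obtain ⟨m₀, hm₀, -⟩ := Fin.exists_ne_and_ne_of_two_lt k₀ k₀ hn
  have hoff' : ∀ a b, a ≠ b → π (g.val a b) = 0 := fun a b hab => by
    rw [← map_zero π, TwoSidedIdeal.mk'_ringCon_eq_iff, sub_zero, mem_annIdeal]
    exact fun r hr => hoff r hr a b hab
  have hdiag' : ∀ a, π (g.val a a) = π (g.val k₀ k₀) := fun a => by
    obtain ⟨m, hma, hmk⟩ := Fin.exists_ne_and_ne_of_two_lt a k₀ hn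
    rw [TwoSidedIdeal.mk'_ringCon_eq_iff, mem_annIdeal]
    intro r hr
    rw [sub_mul, mul_sub, hdiag r hr a m hma.symm, hdiag r hr k₀ m hmk.symm,
      ← hdiag r hr m a hma, ← hdiag r hr m k₀ hmk]
    exact ⟨sub_self _, sub_self _⟩
  have hcomm : ∀ q, Commute (π (g.val k₀ k₀)) q := by
    refine (RingCon.mk'_surjective _).forall.mpr fun s => ?_
    rw [Commute, SemiconjBy, ← map_mul, ← map_mul, TwoSidedIdeal.mk'_ringCon_eq_iff,
      mem_annIdeal]
    intro r hr
    have e₁ := hdiag _ (J.mul_mem_left s r hr) k₀ m₀ hm₀.symm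
    have e₂ := hdiag r hr k₀ m₀ hm₀.symm
    have e₃ := hdiag _ (J.mul_mem_right r s hr) m₀ k₀ hm₀
    have e₄ := hdiag r hr m₀ k₀ hm₀
    constructor
    · rw [sub_mul, mul_assoc, e₁, mul_assoc s (g.val k₀ k₀), e₂, mul_assoc, sub_self]
    · rw [mul_sub, ← mul_assoc, ← e₄, ← mul_assoc, ← e₃, mul_assoc, sub_self]
  have hscalar : (lamI n (annIdeal J) g).val = scalar (Fin n) (π (g.val k₀ k₀)) := by
    ext a b
    rcases eq_or_ne a b with rfl | hab
    · simpa [lamI, π] using hdiag' a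
    · simpa [lamI, π, hab] using hoff' a b hab
  refine Subgroup.mem_comap.mpr (Subgroup.mem_center_iff.mpr fun h => Units.ext ?_)
  rw [Units.val_mul, Units.val_mul, hscalar]
  exact (scalar_commute _ hcomm _).eq.symm

theorem apply_mul_mul_inv_apply_eq_zero_of_commutator {g t : (Matrix (Fin n) (Fin n) R)ˣ}
    {i j : Fin n} {x : R} (ht : t.val = 1 + single i j x)
    (hoff : ∀ a b, a ≠ b → (g * t * g⁻¹ * t⁻¹).val a b = 0) {ν μ : Fin n} (hμν : μ ≠ ν)
    (hμj : μ ≠ j) : g.val ν i * x * (g⁻¹).val j μ = 0 := by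
  have e := congrArg Units.val (inv_mul_cancel_right (g * t * g⁻¹) t).symm
  rw [Units.val_mul _ t, ht, mul_add, mul_one, Units.val_mul, Units.val_mul, ht, mul_add, mul_one,
    add_mul, g.mul_inv] at e
  have e' := congrFun (congrFun e ν) μ
  rwa [Matrix.add_apply, Matrix.add_apply, one_apply_ne hμν.symm, mul_single_mul_apply,
    hoff ν μ hμν.symm, mul_single_apply_of_ne x i j ν μ hμj, zero_add, add_zero] at e'

structure IsTransvectionFreeENormal (N : Subgroup (Matrix (Fin n) (Fin n) R)ˣ) : Prop where
  conj_mem : ∀ e ∈ En n R, ∀ g ∈ N, e * g * e⁻¹ ∈ N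
  eq_one_of_isTransvection : ∀ g ∈ N, IsTransvection g → g = 1

namespace IsTransvectionFreeENormal

variable {N : Subgroup (Matrix (Fin n) (Fin n) R)ˣ} {G : (Matrix (Fin n) (Fin n) R)ˣ} {y : R}

theorem commutator_mem (hN : IsTransvectionFreeENormal N) {u : (Matrix (Fin n) (Fin n) R)ˣ}
    (hG : G ∈ N) (hu : u ∈ En n R) : G * u * G⁻¹ * u⁻¹ ∈ N := by
  rw [show G * u * G⁻¹ * u⁻¹ = G * (u * G⁻¹ * u⁻¹) by group]
  exact mul_mem hG (hN.conj_mem u hu _ (inv_mem hG))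

-- `G u G⁻¹ ∈ N u`, so conjugating `e` by it agrees with conjugating by `u` modulo `N`.
theorem conj_conj_mul_inv_conj_mem (hN : IsTransvectionFreeENormal N)
    {u e : (Matrix (Fin n) (Fin n) R)ˣ} (hG : G ∈ N) (hu : u ∈ En n R) (he : e ∈ En n R) :
    G * u * G⁻¹ * e * (G * u * G⁻¹)⁻¹ * (u * e * u⁻¹)⁻¹ ∈ N := by
  rw [show G * u * G⁻¹ * e * (G * u * G⁻¹)⁻¹ * (u * e * u⁻¹)⁻¹ = (G * u * G⁻¹ * u⁻¹) *
      ((u * e * u⁻¹) * (G * u * G⁻¹ * u⁻¹)⁻¹ * (u * e * u⁻¹)⁻¹) by group]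
  exact mul_mem (hN.commutator_mem hG hu) (hN.conj_mem _ (mul_mem (mul_mem hu he) (inv_mem hu))
    _ (inv_mem (hN.commutator_mem hG hu)))

theorem eq_zero_of_val_eq_one_add_single (hN : IsTransvectionFreeENormal N)
    {z : (Matrix (Fin n) (Fin n) R)ˣ} (hz : z ∈ N) {c d : Fin n} (hcd : c ≠ d) {s : R}
    (hval : z.val = 1 + single c d s) : s = 0 := by
  have hz1 : z = 1 := hN.eq_one_of_isTransvection z hz ⟨c, d, hcd, s, hval⟩
  simpa [hz1, hcd] using (congrFun (congrFun hval c) d).symm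

theorem row_eq_zero (hN : IsTransvectionFreeENormal N) (hn : 3 ≤ n)
    {z : (Matrix (Fin n) (Fin n) R)ˣ} (hz : z ∈ N) {m c : Fin n} {X : Matrix (Fin n) (Fin n) R}
    (hval : z.val = 1 + single m c 1 * X) (hX : X c m = 0) (b : Fin n) : X c b = 0 := by
  rcases eq_or_ne b m with rfl | hbm
  · exact hX
  obtain ⟨d, hdb, hdm⟩ := Fin.exists_ne_and_ne_of_two_lt b m hn
  set E := single m c 1 * X
  set P := single b d (1 : R)
  set e := transvectionUnit hdb.symm (1 : R)
  have hEE : E * E = 0 := by simp [E, ← mul_assoc, hX]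
  have hPP : P * P = 0 := single_mul_single_of_ne _ _ _ _ hdb _
  have hPE : P * E = 0 := by simp [P, E, ← mul_assoc, single_mul_single_of_ne _ _ _ _ hdm]
  have hval' : (e * z * e⁻¹ * z⁻¹).val = 1 + single m d (-X c b) := by
    rw [Units.val_mul, Units.val_mul, Units.val_mul, transvectionUnit_val,
      transvectionUnit_inv_val, hval, Units.coe_inv_eq_one_sub_of_mul_self_eq_zero hval hEE,
      conj_one_add_of_mul_eq_zero hPP hPE]
    simpa [E, P, sub_eq_add_neg, single_neg] using
      one_add_sub_mul_mul_one_sub_add_mul (S := 0) hEE hPE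
  exact neg_eq_zero.mp <| hN.eq_zero_of_val_eq_one_add_single
    (mul_mem (hN.conj_mem e (transvectionUnit_mem_En _ _) z hz) (inv_mem hz)) hdm.symm hval'

theorem col_eq_zero (hN : IsTransvectionFreeENormal N) (hn : 3 ≤ n)
    {z : (Matrix (Fin n) (Fin n) R)ˣ} (hz : z ∈ N) {m c : Fin n} {X : Matrix (Fin n) (Fin n) R}
    (hval : z.val = 1 + X * single c m 1) (hX : X m c = 0) (a : Fin n) : X a c = 0 := by
  rcases eq_or_ne a m with rfl | ham
  · exact hX
  obtain ⟨d, hda, hdm⟩ := Fin.exists_ne_and_ne_of_two_lt a m hn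
  set E := X * single c m 1
  set P := single d a (1 : R)
  set e := transvectionUnit hda (1 : R)
  have hEE : E * E = 0 := by
    rw [show E * E = X * (single c m 1 * X * single c m 1) by simp only [E, mul_assoc],
      single_mul_mul_single, hX]
    simp
  have hPP : P * P = 0 := single_mul_single_of_ne _ _ _ _ hda.symm _
  have hEP : E * P = 0 := by simp [P, E, mul_assoc, single_mul_single_of_ne _ _ _ _ hdm.symm]
  have hval' : (e * z * e⁻¹ * z⁻¹).val = 1 + single d m (X a c) := by
    rw [Units.val_mul, Units.val_mul, Units.val_mul, transvectionUnit_val,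
      transvectionUnit_inv_val, hval, Units.coe_inv_eq_one_sub_of_mul_self_eq_zero hval hEE,
      conj_one_add_of_mul_eq_zero' hPP hEP]
    simpa [E, P, ← mul_assoc] using
      one_add_add_mul_mul_one_sub_sub_mul (W := P) (S := 0) hEE (mul_zero E)
  exact hN.eq_zero_of_val_eq_one_add_single
    (mul_mem (hN.conj_mem e (transvectionUnit_mem_En _ _) z hz) (inv_mem hz)) hdm hval'

theorem mul_single_apply_eq_single_mul_apply (hN : IsTransvectionFreeENormal N) (hn : 3 ≤ n)
    (hG : G ∈ N) {k l m : Fin n} (hkl : k ≠ l) (hml : m ≠ l) (hy : y * (G⁻¹).val l m = 0)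
    {c : Fin n} (hcm : c ≠ m) (t : Fin n) :
    (G.val * single k l y) c t = (single k l y * G.val) c t := by
  set A := G.val
  set B := (G⁻¹).val
  set S := single k l y
  set W := A * S * B
  set P := single m c (1 : R)
  set u := transvectionUnit hkl y
  set e := transvectionUnit hcm.symm (1 : R)
  have hSS : S * S = 0 := single_mul_single_of_ne _ _ _ _ hkl.symm _
  have hSP : S * P = 0 := single_mul_single_of_ne _ _ _ _ hml.symm _
  have hPP : P * P = 0 := single_mul_single_of_ne _ _ _ _ hcm _
  have hWW : W * W = 0 := conj_single_mul_self_eq_zero G hkl y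
  have hWP : W * P = 0 := by
    rw [show W * P = A * (S * B * P) by simp only [W, mul_assoc], single_mul_mul_single, hy]
    simp
  have hγ : (G * u * G⁻¹).val = 1 + W := conj_transvectionUnit_val G hkl y
  have hconj : (u * e * u⁻¹)⁻¹.val = 1 - P + P * S := by
    rw [show (u * e * u⁻¹)⁻¹ = u * e⁻¹ * u⁻¹ by group]
    simp only [Units.val_mul, u, e, transvectionUnit_val, transvectionUnit_inv_val]
    rw [sub_eq_add_neg 1 (single m c 1),
      conj_one_add_of_mul_eq_zero hSS (by rw [mul_neg, hSP, neg_zero])]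
    noncomm_ring
  have hval : (G * u * G⁻¹ * e * (G * u * G⁻¹)⁻¹ * (u * e * u⁻¹)⁻¹).val = 1 + P * (S - W) := by
    rw [Units.val_mul, Units.val_mul, Units.val_mul, hconj, hγ,
      Units.coe_inv_eq_one_sub_of_mul_self_eq_zero hγ hWW, transvectionUnit_val,
      conj_one_add_of_mul_eq_zero hWW hWP, one_add_sub_mul_mul_one_sub_add_mul hPP hWP]
  have hrow : ∀ b, W c b = S c b := fun b => (sub_eq_zero.mp <| hN.row_eq_zero hn
    (hN.conj_conj_mul_inv_conj_mem hG (transvectionUnit_mem_En hkl y)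
      (transvectionUnit_mem_En hcm.symm 1)) hval
    (by
      change single k l y c m - (A * single k l y * B) c m = 0
      rw [mul_single_mul_apply, mul_assoc, hy, mul_zero, sub_zero]
      exact single_apply_of_col_ne _ _ hml.symm _) b).symm
  calc (A * S) c t = (W * A) c t := by
        rw [show W * A = A * S * (B * A) by simp only [W, mul_assoc], G.inv_mul, mul_one]
    _ = (S * A) c t := by simp only [mul_apply, hrow]

theorem single_mul_inv_apply_eq_inv_mul_single_apply (hN : IsTransvectionFreeENormal N)
    (hn : 3 ≤ n) (hG : G ∈ N) {k l m : Fin n} (hkl : k ≠ l) (hmk : m ≠ k)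
    (hy : G.val m k * y = 0) (s : Fin n) {c : Fin n} (hcm : c ≠ m) :
    (single k l y * (G⁻¹).val) s c = ((G⁻¹).val * single k l y) s c := by
  set A := G.val
  set B := (G⁻¹).val
  set S := single k l y
  set W := A * S * B
  set P := single c m (1 : R)
  set u := transvectionUnit hkl y
  set e := transvectionUnit hcm (1 : R)
  have hSS : S * S = 0 := single_mul_single_of_ne _ _ _ _ hkl.symm _
  have hPS : P * S = 0 := single_mul_single_of_ne _ _ _ _ hmk _
  have hPP : P * P = 0 := single_mul_single_of_ne _ _ _ _ hcm.symm _
  have hWW : W * W = 0 := conj_single_mul_self_eq_zero G hkl y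
  have hPW : P * W = 0 := by
    rw [show P * W = P * A * S * B by simp only [W, mul_assoc], single_mul_mul_single, one_mul,
      hy]
    simp
  have hγ : (G * u * G⁻¹).val = 1 + W := conj_transvectionUnit_val G hkl y
  have hconj : (u * e * u⁻¹)⁻¹.val = 1 - P - S * P := by
    rw [show (u * e * u⁻¹)⁻¹ = u * e⁻¹ * u⁻¹ by group]
    simp only [Units.val_mul, u, e, transvectionUnit_val, transvectionUnit_inv_val]
    rw [sub_eq_add_neg 1 (single c m 1),
      conj_one_add_of_mul_eq_zero' hSS (by rw [neg_mul, hPS, neg_zero])]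
    noncomm_ring
  have hval : (G * u * G⁻¹ * e * (G * u * G⁻¹)⁻¹ * (u * e * u⁻¹)⁻¹).val = 1 + (W - S) * P := by
    rw [Units.val_mul, Units.val_mul, Units.val_mul, hconj, hγ,
      Units.coe_inv_eq_one_sub_of_mul_self_eq_zero hγ hWW, transvectionUnit_val,
      conj_one_add_of_mul_eq_zero' hWW hPW, one_add_add_mul_mul_one_sub_sub_mul hPP hPS]
  have hcol : ∀ a, W a c = S a c := fun a => sub_eq_zero.mp <| hN.col_eq_zero hn
    (hN.conj_conj_mul_inv_conj_mem hG (transvectionUnit_mem_En hkl y)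
      (transvectionUnit_mem_En hcm 1)) hval
    (by
      change (A * single k l y * B) m c - single k l y m c = 0
      rw [mul_single_mul_apply, hy, zero_mul, zero_sub, neg_eq_zero]
      exact single_apply_of_row_ne hmk.symm _ _ _) a
  calc (S * B) s c = (B * W) s c := by
        rw [show B * W = B * A * S * B by simp only [W, mul_assoc], G.inv_mul, one_mul]
    _ = (B * S) s c := by simp only [mul_apply, hcol]

theorem mul_inv_apply_eq_zero_of_apply_mul_eq_zero (hN : IsTransvectionFreeENormal N)
    (hn : 3 ≤ n) (hG : G ∈ N) {m k : Fin n} (hmk : m ≠ k) (hy : G.val m k * y = 0) {l : Fin n}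
    (hlk : l ≠ k) : y * (G⁻¹).val l k = 0 := by
  simpa [mul_single_apply_of_ne y k l k k hlk.symm] using
    hN.single_mul_inv_apply_eq_inv_mul_single_apply hn hG hlk.symm hmk hy k hmk.symm

theorem mul_apply_eq_zero_of_mul_inv_apply_eq_zero (hN : IsTransvectionFreeENormal N)
    (hn : 3 ≤ n) (hG : G ∈ N) {l m : Fin n} (hml : m ≠ l) (hy : y * (G⁻¹).val l m = 0) {t : Fin n}
    (htl : t ≠ l) : y * G.val l t = 0 := by
  obtain ⟨k, hkl, hkm⟩ := Fin.exists_ne_and_ne_of_two_lt l m hn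
  simpa [htl] using (hN.mul_single_apply_eq_single_mul_apply hn hG hkl hml hy hkm t).symm

theorem apply_mul_eq_zero_of_mul_inv_apply_eq_zero (hN : IsTransvectionFreeENormal N)
    (hn : 3 ≤ n) (hG : G ∈ N) {l m : Fin n} (hml : m ≠ l) (hy : y * (G⁻¹).val l m = 0)
    {c k : Fin n} (hkl : k ≠ l) (hcm : c ≠ m) (hck : c ≠ k) : G.val c k * y = 0 := by
  simpa [hck] using hN.mul_single_apply_eq_single_mul_apply hn hG hkl hml hy hcm l

theorem apply_mul_eq_mul_apply_of_mul_inv_apply_eq_zero (hN : IsTransvectionFreeENormal N)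
    (hn : 3 ≤ n) (hG : G ∈ N) {l m : Fin n} (hml : m ≠ l) (hy : y * (G⁻¹).val l m = 0)
    {k : Fin n} (hkl : k ≠ l) (hkm : k ≠ m) : G.val k k * y = y * G.val l l := by
  simpa using hN.mul_single_apply_eq_single_mul_apply hn hG hkl hml hy hkm l

theorem apply_mul_eq_zero_of_mul_apply_eq_zero (hN : IsTransvectionFreeENormal N)
    (hn : 3 ≤ n) (hG : G ∈ N) {l m : Fin n} (hml : m ≠ l) (hy : y * G.val l m = 0) :
    G.val l m * y = 0 :=
  hN.apply_mul_eq_zero_of_mul_inv_apply_eq_zero hn hG hml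
    (hN.mul_apply_eq_zero_of_mul_inv_apply_eq_zero hn (inv_mem hG) hml (by rwa [inv_inv]) hml)
    hml hml.symm hml.symm

theorem mul_inv_offDiag_eq_zero (hN : IsTransvectionFreeENormal N) (hn : 3 ≤ n) (hG : G ∈ N)
    {m k : Fin n} (hmk : m ≠ k) (hy : G.val m k * y = 0) :
    ∀ a b, a ≠ b → y * (G⁻¹).val a b = 0 := by
  intro a b hab
  rcases eq_or_ne b k with rfl | hbk
  · exact hN.mul_inv_apply_eq_zero_of_apply_mul_eq_zero hn hG hmk hy hab
  obtain ⟨l, hlk, hlb⟩ := Fin.exists_ne_and_ne_of_two_lt k b hn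
  have hl : G.val l b * y = 0 := hN.apply_mul_eq_zero_of_mul_inv_apply_eq_zero hn hG hlk.symm
    (hN.mul_inv_apply_eq_zero_of_apply_mul_eq_zero hn hG hmk hy hlk) hlb.symm hlk hlb
  exact hN.mul_inv_apply_eq_zero_of_apply_mul_eq_zero hn hG hlb hl hab

theorem apply_mul_eq_zero_and_mul_apply_eq_zero (hN : IsTransvectionFreeENormal N) (hn : 3 ≤ n)
    (hG : G ∈ N) (hy : ∀ a b, a ≠ b → y * (G⁻¹).val a b = 0) {a b : Fin n} (hab : a ≠ b) :
    G.val a b * y = 0 ∧ y * G.val a b = 0 :=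
  ⟨hN.apply_mul_eq_zero_of_mul_inv_apply_eq_zero hn hG hab.symm (hy a b hab) hab.symm hab hab,
    hN.mul_apply_eq_zero_of_mul_inv_apply_eq_zero hn hG hab.symm (hy a b hab) hab.symm⟩

theorem apply_mul_eq_mul_apply (hN : IsTransvectionFreeENormal N) (hn : 3 ≤ n) (hG : G ∈ N)
    (hy : ∀ a b, a ≠ b → y * (G⁻¹).val a b = 0) {k l : Fin n} (hkl : k ≠ l) :
    G.val k k * y = y * G.val l l := by
  obtain ⟨m, hmk, hml⟩ := Fin.exists_ne_and_ne_of_two_lt k l hn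
  exact hN.apply_mul_eq_mul_apply_of_mul_inv_apply_eq_zero hn hG hml (hy l m hml.symm) hkl
    hmk.symm

theorem mul_apply_eq_zero_of_apply_mul_mul_inv_apply_eq_zero (hN : IsTransvectionFreeENormal N)
    (hn : 3 ≤ n) (hG : G ∈ N) {i j : Fin n} {x : R}
    (hx : ∀ ν μ, μ ≠ ν → μ ≠ j → G.val ν i * x * (G⁻¹).val j μ = 0) (w : R) {s : Fin n}
    (hsj : s ≠ j) : w * x * G.val j s = 0 := by
  have hsum : w * x = ∑ ν, w * (G⁻¹).val i ν * (G.val ν i * x) := by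
    calc w * x = w * ((G⁻¹).val * G.val) i i * x := by rw [G.inv_mul, one_apply_eq, mul_one]
      _ = _ := by simp only [mul_apply, Finset.mul_sum, Finset.sum_mul, mul_assoc]
  rw [hsum, Finset.sum_mul]
  refine Finset.sum_eq_zero fun ν _ => ?_
  obtain ⟨μ, hμν, hμj⟩ := Fin.exists_ne_and_ne_of_two_lt ν j hn
  exact hN.mul_apply_eq_zero_of_mul_inv_apply_eq_zero hn hG hμj
    (by rw [mul_assoc, hx ν μ hμν hμj, mul_zero]) hsj

theorem apply_mul_eq_zero_of_mem_span (hN : IsTransvectionFreeENormal N) (hn : 3 ≤ n)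
    (hG : G ∈ N) {l m : Fin n} (hml : m ≠ l) {x : R} (hx : ∀ w, w * x * G.val l m = 0) {r : R}
    (hr : r ∈ TwoSidedIdeal.span {x}) : G.val l m * r = 0 := by
  suffices ∀ w, G.val l m * (w * r) = 0 by simpa using this 1
  induction hr using TwoSidedIdeal.span_induction with
  | mem y hy =>
    rw [Set.mem_singleton_iff.mp hy]
    exact fun w => hN.apply_mul_eq_zero_of_mul_apply_eq_zero hn hG hml (hx w)
  | zero => simp
  | add y z _ _ hy hz => exact fun w => by rw [mul_add, mul_add, hy, hz, add_zero]
  | neg y _ hy => exact fun w => by rw [mul_neg, mul_neg, hy, neg_zero]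
  | left_absorb a y _ hy => exact fun w => by rw [← mul_assoc w]; exact hy (w * a)
  | right_absorb b y _ hy => exact fun w => by rw [← mul_assoc w, ← mul_assoc, hy w, zero_mul]

end IsTransvectionFreeENormal

end

/-- if `g ∈ N` and the commutator `[g, t_{ij}(x)]` has a zero
off-diagonal entry, then `g ∈ C(n, Ann(RxR))`. -/
theorem statement5 {R : Type*} [Ring R] {n : ℕ} (hn : 3 ≤ n)
    (N : Subgroup (Matrix (Fin n) (Fin n) R)ˣ)
    (hNinv : ∀ e ∈ En n R, ∀ g ∈ N, e * g * e⁻¹ ∈ N)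
    (hNtv : ∀ g ∈ N, IsTransvection g → g = 1)
    (g : (Matrix (Fin n) (Fin n) R)ˣ) (hg : g ∈ N)
    (i j : Fin n) (hij : i ≠ j) (x : R)
    (t : (Matrix (Fin n) (Fin n) R)ˣ) (ht : t.val = 1 + Matrix.single i j x)
    (p q : Fin n) (hpq : p ≠ q)
    (hzero : (g * t * g⁻¹ * t⁻¹).val p q = 0) :
    g ∈ CnI n (annIdeal (TwoSidedIdeal.span {x})) := by
  have hN : IsTransvectionFreeENormal N := ⟨hNinv, hNtv⟩
  have htE : t ∈ En n R := by
    rw [show t = transvectionUnit hij x from Units.ext ht]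
    exact transvectionUnit_mem_En hij x
  have hh := hN.commutator_mem hg htE
  have hoff : ∀ a b, a ≠ b → (g * t * g⁻¹ * t⁻¹).val a b = 0 := fun a b hab => by
    simpa using (hN.apply_mul_eq_zero_and_mul_apply_eq_zero hn hh
      (hN.mul_inv_offDiag_eq_zero hn hh hpq (y := 1) (by rw [hzero, zero_mul])) hab).1
  obtain ⟨s, hsj, -⟩ := Fin.exists_ne_and_ne_of_two_lt j j hn
  have hx : ∀ w, w * x * g.val j s = 0 := fun w =>
    hN.mul_apply_eq_zero_of_apply_mul_mul_inv_apply_eq_zero hn hg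
      (fun ν μ hμν hμj => apply_mul_mul_inv_apply_eq_zero_of_commutator ht hoff hμν hμj) w hsj
  have hspan := fun r (hr : r ∈ TwoSidedIdeal.span {x}) =>
    hN.mul_inv_offDiag_eq_zero hn hg hsj.symm (hN.apply_mul_eq_zero_of_mem_span hn hg hsj hx hr)
  exact mem_CnI_annIdeal hn
    (fun r hr a b hab => hN.apply_mul_eq_zero_and_mul_apply_eq_zero hn hg (hspan r hr) hab)
    (fun r hr k l hkl => hN.apply_mul_eq_mul_apply hn hg (hspan r hr) hkl)
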